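/- arXiv:1802.09829 — 6 statements merged into one kernel-verified Lean document; each statement's English description precedes it below -/
import Mathlib

section
/- If L_u is a symmetric positive semidefinite real n×n matrix with L_u·𝟙 = 0 and rank n−1 (i.e., the Laplacian of a connected undirected graph), and L̄_u = Q L_u Qᵀ where Q has rows forming an orthonormal basis of 𝟙^⊥, then Σ = (1/2) L̄_u^{-1} solves the Lyapunov equation L̄_u Σ + Σ L̄_u ᵀ = I_{n-1}, and consequently X = 2QᵀΣQ equals the Moore–Penrose pseudoinverse L_u⁺. -/
open Matrix

/-- The four Moore–Penrose conditions characterizing the pseudoinverse. -/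
def IsMoorePenrose {m : Type*} [Fintype m] [DecidableEq m]
    (A B : Matrix m m ℝ) : Prop :=
  A * B * A = A ∧ B * A * B = B ∧ (A * B)ᵀ = A * B ∧ (B * A)ᵀ = B * A

/-!
Since `Lu` kills `𝟙` on both sides, the projection `Qᵀ Q = I - 𝟙𝟙ᵀ/n` acts as the identity on
either side of `Lu`, so `Lu = Qᵀ L̄ Q` with `L̄ = Q Lu Qᵀ`. Hence `rank L̄ ≥ rank Lu = n - 1` and `L̄`
is invertible. The Lyapunov equation is then immediate from the symmetry of `L̄`, and
`Lu (Qᵀ L̄⁻¹ Q) = Qᵀ Q = (Qᵀ L̄⁻¹ Q) Lu` is a symmetric projection fixing `Lu`, which gives the four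
Moore–Penrose identities.
-/

namespace Matrix

variable {m n R K : Type*}

theorem isUnit_of_rank_eq_card [Fintype m] [DecidableEq m] [Field K] {A : Matrix m m K}
    (h : A.rank = Fintype.card m) : IsUnit A := by
  rw [← mulVec_surjective_iff_isUnit, ← Matrix.coe_mulVecLin, ← LinearMap.range_eq_top]
  exact Submodule.eq_top_of_finrank_eq (by rw [← rank, h, Module.finrank_fintype_fun_eq_card])

theorem mul_of_one_eq_zero {l : Type*} [Fintype n] [CommSemiring R] {A : Matrix m n R}
    (h : A *ᵥ 1 = 0) : A * (of fun _ _ => 1 : Matrix n l R) = 0 := by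
  ext i j
  simpa [mul_apply, mulVec, dotProduct] using congrFun h i

theorem of_one_mul_eq_zero [Fintype n] [CommSemiring R] {A : Matrix n n R} (hA : Aᵀ = A)
    (h : A *ᵥ 1 = 0) : (of fun _ _ => 1 : Matrix n n R) * A = 0 := by
  have h' := congrArg transpose (mul_of_one_eq_zero (l := n) h)
  rwa [transpose_mul, hA, transpose_zero] at h'

theorem mul_smul_inv_add_smul_inv_mul_transpose [Fintype m] [DecidableEq m] [CommRing R]
    {M : Matrix m m R} (hM : Mᵀ = M) (hdet : IsUnit M.det) (c : R) :
    M * (c • M⁻¹) + (c • M⁻¹) * Mᵀ = (c + c) • 1 := by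
  rw [hM, Matrix.mul_smul, Matrix.smul_mul, mul_nonsing_inv M hdet, nonsing_inv_mul M hdet,
    add_smul]

section Compression

variable [Fintype m] [Fintype n]

theorem transpose_mul_compress_mul [CommSemiring R] {Q : Matrix m n R} {A : Matrix n n R}
    (hAP : A * (Qᵀ * Q) = A) (hPA : Qᵀ * Q * A = A) :
    Qᵀ * (Q * A * Qᵀ) * Q = A := by
  rw [← Matrix.mul_assoc, ← Matrix.mul_assoc, hPA, Matrix.mul_assoc, hAP]

theorem rank_le_rank_compress [CommRing R] [StrongRankCondition R] {Q : Matrix m n R}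
    {A : Matrix n n R} (hAP : A * (Qᵀ * Q) = A) (hPA : Qᵀ * Q * A = A) :
    A.rank ≤ (Q * A * Qᵀ).rank :=
  calc A.rank = (Qᵀ * (Q * A * Qᵀ) * Q).rank := by rw [transpose_mul_compress_mul hAP hPA]
    _ ≤ (Qᵀ * (Q * A * Qᵀ)).rank := rank_mul_le_left _ _
    _ ≤ (Q * A * Qᵀ).rank := rank_mul_le_right _ _

theorem isUnit_det_compress [DecidableEq m] [Field K] {Q : Matrix m n K} {A : Matrix n n K}
    (hAP : A * (Qᵀ * Q) = A) (hPA : Qᵀ * Q * A = A) (hrank : A.rank = Fintype.card m) :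
    IsUnit (Q * A * Qᵀ).det := by
  refine (isUnit_iff_isUnit_det _).mp (isUnit_of_rank_eq_card ?_)
  exact le_antisymm (rank_le_card_height _) (hrank ▸ rank_le_rank_compress hAP hPA)

theorem isMoorePenrose_transpose_mul_inv_compress_mul [DecidableEq m] [DecidableEq n]
    {Q : Matrix m n ℝ} {A : Matrix n n ℝ} (hQQ : Q * Qᵀ = 1) (hAP : A * (Qᵀ * Q) = A)
    (hPA : Qᵀ * Q * A = A) (hdet : IsUnit (Q * A * Qᵀ).det) :
    IsMoorePenrose A (Qᵀ * (Q * A * Qᵀ)⁻¹ * Q) := by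
  set M := Q * A * Qᵀ
  have hQA : Q * A = M * Q := by simp only [M, Matrix.mul_assoc, hAP]
  have hAQ : A * Qᵀ = Qᵀ * M := by simp only [M, ← Matrix.mul_assoc, hPA]
  have hAB : A * (Qᵀ * M⁻¹ * Q) = Qᵀ * Q := by
    rw [← Matrix.mul_assoc, ← Matrix.mul_assoc, hAQ, Matrix.mul_assoc Qᵀ, mul_nonsing_inv M hdet,
      Matrix.mul_one]
  have hBA : Qᵀ * M⁻¹ * Q * A = Qᵀ * Q := by
    rw [Matrix.mul_assoc, hQA, ← Matrix.mul_assoc, Matrix.mul_assoc Qᵀ, nonsing_inv_mul M hdet,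
      Matrix.mul_one]
  refine ⟨by rw [hAB, hPA], ?_, ?_, ?_⟩
  · rw [Matrix.mul_assoc, hAB, ← Matrix.mul_assoc, Matrix.mul_assoc _ Q, hQQ, Matrix.mul_one]
  · rw [hAB, transpose_mul, transpose_transpose]
  · rw [hBA, transpose_mul, transpose_transpose]

end Compression

end Matrix

theorem symm_laplacian_lyapunov_pinv_general {n : ℕ}
    (Lu : Matrix (Fin n) (Fin n) ℝ) (hsym : Luᵀ = Lu)
    (hrow : Lu *ᵥ (1 : Fin n → ℝ) = 0) (hrank : Lu.rank = n - 1)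
    (Q : Matrix (Fin (n - 1)) (Fin n) ℝ)
    (hQQ : Q * Qᵀ = 1)
    (hQP : Qᵀ * Q = 1 - (n : ℝ)⁻¹ • Matrix.of (fun _ _ => (1 : ℝ))) :
    (Q * Lu * Qᵀ) * ((1 / 2 : ℝ) • (Q * Lu * Qᵀ)⁻¹) +
      ((1 / 2 : ℝ) • (Q * Lu * Qᵀ)⁻¹) * (Q * Lu * Qᵀ)ᵀ = 1 ∧
    IsMoorePenrose Lu ((2 : ℝ) • (Qᵀ * ((1 / 2 : ℝ) • (Q * Lu * Qᵀ)⁻¹) * Q)) := by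
  have hLP : Lu * (Qᵀ * Q) = Lu := by
    rw [hQP, Matrix.mul_sub, Matrix.mul_one, Matrix.mul_smul, mul_of_one_eq_zero hrow, smul_zero,
      sub_zero]
  have hPL : Qᵀ * Q * Lu = Lu := by
    rw [hQP, Matrix.sub_mul, Matrix.one_mul, Matrix.smul_mul, of_one_mul_eq_zero hsym hrow,
      smul_zero, sub_zero]
  have hdet : IsUnit (Q * Lu * Qᵀ).det :=
    isUnit_det_compress hLP hPL (by rw [hrank, Fintype.card_fin])
  have hMsym : (Q * Lu * Qᵀ)ᵀ = Q * Lu * Qᵀ := by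
    rw [transpose_mul, transpose_mul, transpose_transpose, hsym, Matrix.mul_assoc]
  refine ⟨by rw [mul_smul_inv_add_smul_inv_mul_transpose hMsym hdet]; norm_num, ?_⟩
  rw [Matrix.mul_smul, Matrix.smul_mul, smul_smul, mul_one_div_cancel two_ne_zero, one_smul]
  exact isMoorePenrose_transpose_mul_inv_compress_mul hQQ hLP hPL hdet

/-- For a connected undirected graph Laplacian `Lu`,
`Σ = (1/2) (Q Lu Qᵀ)⁻¹` solves the Lyapunov equation, and `X = 2QᵀΣQ = Lu⁺`. -/
theorem symm_laplacian_lyapunov_pinv {n : ℕ} (hn : 0 < n)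
    (Lu : Matrix (Fin n) (Fin n) ℝ) (hsym : Luᵀ = Lu) (hpsd : Lu.PosSemidef)
    (hrow : Lu *ᵥ (1 : Fin n → ℝ) = 0) (hrank : Lu.rank = n - 1)
    (Q : Matrix (Fin (n - 1)) (Fin n) ℝ)
    (hQ1 : Q *ᵥ (1 : Fin n → ℝ) = 0) (hQQ : Q * Qᵀ = 1)
    (hQP : Qᵀ * Q = 1 - (n : ℝ)⁻¹ • Matrix.of (fun _ _ => (1 : ℝ))) :
    (Q * Lu * Qᵀ) * ((1 / 2 : ℝ) • (Q * Lu * Qᵀ)⁻¹) +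
      ((1 / 2 : ℝ) • (Q * Lu * Qᵀ)⁻¹) * (Q * Lu * Qᵀ)ᵀ = 1 ∧
    IsMoorePenrose Lu ((2 : ℝ) • (Qᵀ * ((1 / 2 : ℝ) • (Q * Lu * Qᵀ)⁻¹) * Q)) :=
  symm_laplacian_lyapunov_pinv_general Lu hsym hrow hrank Q hQQ hQP
end

section
/- For a connected undirected graph, the effective resistance defined via the Lyapunov equation, r_{ij} = (e_i − e_j)ᵀ X (e_i − e_j) with X = 2QᵀΣQ and L̄Σ + ΣL̄ᵀ = I, coincides with the classical resistance distance (e_i − e_j)ᵀ L_u⁺ (e_i − e_j). -/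
/-!
Compressing `L_u` by `Q` removes its kernel, the constants, so `L̄ = Q L_u Qᵀ` is positive
definite. Adding the Lyapunov equation to its transpose shows that `Σ + Σᵀ` solves
`L̄ X + X L̄ = 2`, whose only symmetric solution is `L̄⁻¹`; and the quadratic form of `2 Qᵀ Σ Q`
is that of `Qᵀ (Σ + Σᵀ) Q`. Finally `Qᵀ L̄⁻¹ Q` satisfies the four Moore–Penrose conditions for
`L_u = Qᵀ L̄ Q`, so it is `L_u⁺`.
-/

open Matrix

theorem IsMoorePenrose.unique {m : Type*} [Fintype m] [DecidableEq m] {A B C : Matrix m m ℝ}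
    (hB : IsMoorePenrose A B) (hC : IsMoorePenrose A C) : B = C := by
  obtain ⟨hB1, hB2, hB3, hB4⟩ := hB
  obtain ⟨hC1, hC2, hC3, hC4⟩ := hC
  have hAB : A * B = A * C := by
    calc A * B = (A * C) * (A * B) := by rw [← mul_assoc, hC1]
    _ = ((A * B) * (A * C))ᵀ := by rw [transpose_mul, hC3, hB3]
    _ = A * C := by rw [← mul_assoc, hB1, hC3]
  have hBA : B * A = C * A := by
    calc B * A = (B * A) * (C * A) := by rw [mul_assoc, ← mul_assoc A C A, hC1]
    _ = ((C * A) * (B * A))ᵀ := by rw [transpose_mul, hC4, hB4]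
    _ = C * A := by rw [mul_assoc, ← mul_assoc A, hB1, hC4]
  calc B = B * A * B := hB2.symm
  _ = C * A * C := by rw [mul_assoc, hAB, ← mul_assoc, hBA]
  _ = C := hC2

theorem isMoorePenrose_transpose_mul_mul {k m : Type*} [Fintype k] [Fintype m] [DecidableEq k]
    [DecidableEq m] {L : Matrix k k ℝ} {Q : Matrix k m ℝ} (hL : IsUnit L.det)
    (hQQ : Q * Qᵀ = 1) : IsMoorePenrose (Qᵀ * L * Q) (Qᵀ * L⁻¹ * Q) := by
  have hPT : (Qᵀ * Q)ᵀ = Qᵀ * Q := by rw [transpose_mul, transpose_transpose]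
  have hAB : Qᵀ * L * Q * (Qᵀ * L⁻¹ * Q) = Qᵀ * Q := by
    simp only [Matrix.mul_assoc]
    rw [← Matrix.mul_assoc Q Qᵀ, hQQ, Matrix.one_mul, ← Matrix.mul_assoc L,
      mul_nonsing_inv _ hL, Matrix.one_mul]
  have hBA : Qᵀ * L⁻¹ * Q * (Qᵀ * L * Q) = Qᵀ * Q := by
    simp only [Matrix.mul_assoc]
    rw [← Matrix.mul_assoc Q Qᵀ, hQQ, Matrix.one_mul, ← Matrix.mul_assoc L⁻¹,
      nonsing_inv_mul _ hL, Matrix.one_mul]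
  have hP : ∀ X : Matrix k k ℝ, Qᵀ * Q * (Qᵀ * X * Q) = Qᵀ * X * Q := fun X => by
    simp only [Matrix.mul_assoc]
    rw [← Matrix.mul_assoc Q Qᵀ, hQQ, Matrix.one_mul]
  exact ⟨by rw [hAB, hP], by rw [hBA, hP], by rw [hAB, hPT], by rw [hBA, hPT]⟩

namespace Matrix

variable {k m : Type*} [Fintype k] [Fintype m]

theorem ker_mulVecLin_eq_span_singleton {A : Matrix m m ℝ} {u : m → ℝ} (hu : u ≠ 0)
    (hAu : A *ᵥ u = 0) (hrank : A.rank = Fintype.card m - 1) :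
    LinearMap.ker A.mulVecLin = Submodule.span ℝ {u} := by
  have hdim := LinearMap.finrank_range_add_finrank_ker A.mulVecLin
  rw [Module.finrank_fintype_fun_eq_card, ← Matrix.rank, hrank] at hdim
  refine (Submodule.eq_of_le_of_finrank_le ?_ ?_).symm
  · simpa [Submodule.span_le] using hAu
  · rw [finrank_span_singleton hu]
    omega

theorem mul_const_one_eq_zero {A : Matrix m m ℝ} (h : A *ᵥ 1 = 0) :
    A * of (fun _ _ => (1 : ℝ)) = 0 := by
  ext i j
  simpa [mul_apply, mulVec, dotProduct] using congrFun h i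

theorem mul_one_sub_smul_const_one [DecidableEq m] {A : Matrix m m ℝ} (h : A *ᵥ 1 = 0)
    (c : ℝ) : A * (1 - c • of fun _ _ => (1 : ℝ)) = A := by
  rw [mul_sub, mul_one, Matrix.mul_smul, mul_const_one_eq_zero h, smul_zero, sub_zero]

theorem one_sub_smul_const_one_mul [DecidableEq m] {A : Matrix m m ℝ} (hA : Aᵀ = A)
    (h : A *ᵥ 1 = 0) (c : ℝ) : (1 - c • of fun _ _ => (1 : ℝ)) * A = A := by
  have := congrArg (·ᵀ) (mul_one_sub_smul_const_one h c)
  rwa [transpose_mul, hA, transpose_sub, transpose_one, transpose_smul] at this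

theorem PosSemidef.posDef_mul_mul_transpose {A : Matrix m m ℝ} (hA : A.PosSemidef)
    [DecidableEq k] {Q : Matrix k m ℝ} (hQQ : Q * Qᵀ = 1)
    (hker : ∀ v, A *ᵥ v = 0 → Q *ᵥ v = 0) : (Q * A * Qᵀ).PosDef := by
  have hpsd : (Q * A * Qᵀ).PosSemidef := by
    simpa [conjTranspose_eq_transpose_of_trivial] using hA.mul_mul_conjTranspose_same Q
  refine .of_dotProduct_mulVec_pos hpsd.isHermitian fun x hx => ?_
  have hform : star x ⬝ᵥ (Q * A * Qᵀ) *ᵥ x = star (Qᵀ *ᵥ x) ⬝ᵥ A *ᵥ (Qᵀ *ᵥ x) := by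
    simp only [star_trivial, ← mulVec_mulVec, dotProduct_mulVec x Q, ← mulVec_transpose]
  refine (hpsd.dotProduct_mulVec_nonneg x).lt_of_ne' fun h0 => hx ?_
  rw [hform, hA.dotProduct_mulVec_zero_iff] at h0
  rw [← one_mulVec x, ← hQQ, ← mulVec_mulVec, hker _ h0]

theorem PosDef.eq_zero_of_mul_add_mul_eq_zero {L D : Matrix m m ℝ} (hL : L.PosDef)
    (hD : Dᵀ = D) (h : L * D + D * L = 0) : D = 0 := by
  have hpsd : (Dᵀ * L * D).PosSemidef := by
    simpa [conjTranspose_eq_transpose_of_trivial] using hL.posSemidef.conjTranspose_mul_mul_same D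
  have htrace : (Dᵀ * L * D).trace = 0 := by
    have hsum : (L * D * D).trace + (D * L * D).trace = 0 := by
      rw [← trace_add, ← add_mul, h, zero_mul, trace_zero]
    have hcyc : (L * D * D).trace = (D * L * D).trace := by
      rw [trace_mul_comm, ← mul_assoc]
    rw [hD]
    linarith
  have hzero : Dᵀ * L * D = 0 := hpsd.trace_eq_zero_iff.mp htrace
  refine ext_iff_mulVec.mpr fun x => ?_
  rw [zero_mulVec]
  by_contra hx
  have hform : star (D *ᵥ x) ⬝ᵥ L *ᵥ (D *ᵥ x) = x ⬝ᵥ (Dᵀ * L * D) *ᵥ x := by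
    simp only [star_trivial, ← mulVec_mulVec, dotProduct_mulVec x Dᵀ, vecMul_transpose]
  have hpos := hL.dotProduct_mulVec_pos hx
  rw [hform, hzero, zero_mulVec, dotProduct_zero] at hpos
  exact hpos.false

theorem PosDef.add_transpose_eq_inv_of_lyapunov [DecidableEq m] {L S : Matrix m m ℝ}
    (hL : L.PosDef) (hS : L * S + S * Lᵀ = 1) : S + Sᵀ = L⁻¹ := by
  have hLT : Lᵀ = L := (isHermitian_iff_isSymm.mp hL.isHermitian).eq
  have hunit : IsUnit L.det := (isUnit_iff_isUnit_det L).mp hL.isUnit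
  rw [hLT] at hS
  have hST : L * Sᵀ + Sᵀ * L = 1 := by
    simpa [add_comm, hLT] using congrArg (·ᵀ) hS
  rw [← sub_eq_zero]
  refine hL.eq_zero_of_mul_add_mul_eq_zero ?_ ?_
  · rw [transpose_sub, transpose_add, transpose_transpose, transpose_nonsing_inv, hLT,
      add_comm Sᵀ]
  · calc L * (S + Sᵀ - L⁻¹) + (S + Sᵀ - L⁻¹) * L
        = (L * S + S * L) + (L * Sᵀ + Sᵀ * L) - (L * L⁻¹ + L⁻¹ * L) := by
          simp only [mul_sub, sub_mul, mul_add, add_mul]; abel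
      _ = 0 := by rw [hS, hST, mul_nonsing_inv _ hunit, nonsing_inv_mul _ hunit, sub_self]

theorem dotProduct_two_smul_mulVec (M : Matrix m m ℝ) (v : m → ℝ) :
    v ⬝ᵥ ((2 : ℝ) • M) *ᵥ v = v ⬝ᵥ (M + Mᵀ) *ᵥ v := by
  rw [two_smul, add_mulVec, add_mulVec, dotProduct_add, dotProduct_add, mulVec_transpose,
    dotProduct_comm v (v ᵥ* M), dotProduct_mulVec]

end Matrix

theorem effective_resistance_eq_resistance_distance_general {n : ℕ}
    (Lu : Matrix (Fin n) (Fin n) ℝ) (hpsd : Lu.PosSemidef)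
    (hrow : Lu *ᵥ (1 : Fin n → ℝ) = 0) (hrank : Lu.rank = n - 1)
    (Q : Matrix (Fin (n - 1)) (Fin n) ℝ)
    (hQ1 : Q *ᵥ (1 : Fin n → ℝ) = 0) (hQQ : Q * Qᵀ = 1)
    (hQP : Qᵀ * Q = 1 - (n : ℝ)⁻¹ • Matrix.of (fun _ _ => (1 : ℝ)))
    (S : Matrix (Fin (n - 1)) (Fin (n - 1)) ℝ)
    (hS : (Q * Lu * Qᵀ) * S + S * (Q * Lu * Qᵀ)ᵀ = 1)
    (B : Matrix (Fin n) (Fin n) ℝ) (hB : IsMoorePenrose Lu B) :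
    ∀ i j : Fin n,
      (Pi.single i 1 - Pi.single j 1) ⬝ᵥ
          (((2 : ℝ) • (Qᵀ * S * Q)) *ᵥ (Pi.single i 1 - Pi.single j 1)) =
      (Pi.single i 1 - Pi.single j 1) ⬝ᵥ (B *ᵥ (Pi.single i 1 - Pi.single j 1)) := by
  intro i j
  have : Nonempty (Fin n) := ⟨i⟩
  have hker := ker_mulVecLin_eq_span_singleton one_ne_zero hrow (by rwa [Fintype.card_fin])
  have hLbar : (Q * Lu * Qᵀ).PosDef := hpsd.posDef_mul_mul_transpose hQQ fun v hv => by
    obtain ⟨c, rfl⟩ := Submodule.mem_span_singleton.mp (hker ▸ LinearMap.mem_ker.mpr hv)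
    rw [mulVec_smul, hQ1, smul_zero]
  have hLu : Qᵀ * (Q * Lu * Qᵀ) * Q = Lu := by
    have hsym : Luᵀ = Lu := (isHermitian_iff_isSymm.mp hpsd.isHermitian).eq
    calc Qᵀ * (Q * Lu * Qᵀ) * Q = Qᵀ * Q * Lu * (Qᵀ * Q) := by simp only [Matrix.mul_assoc]
      _ = Lu := by rw [hQP, one_sub_smul_const_one_mul hsym hrow, mul_one_sub_smul_const_one hrow]
  have hMP := isMoorePenrose_transpose_mul_mul ((isUnit_iff_isUnit_det _).mp hLbar.isUnit) hQQ
  rw [hLu] at hMP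
  rw [hB.unique hMP, ← hLbar.add_transpose_eq_inv_of_lyapunov hS, dotProduct_two_smul_mulVec,
    transpose_mul, transpose_mul, transpose_transpose, ← Matrix.mul_assoc, ← Matrix.add_mul,
    ← Matrix.mul_add]

/-- For a connected undirected graph, effective resistance defined via the
Lyapunov equation coincides with the classical resistance distance `(eᵢ-eⱼ)ᵀ Lu⁺ (eᵢ-eⱼ)`. -/
theorem effective_resistance_eq_resistance_distance {n : ℕ} (hn : 0 < n)
    (Lu : Matrix (Fin n) (Fin n) ℝ) (hsym : Luᵀ = Lu) (hpsd : Lu.PosSemidef)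
    (hrow : Lu *ᵥ (1 : Fin n → ℝ) = 0) (hrank : Lu.rank = n - 1)
    (Q : Matrix (Fin (n - 1)) (Fin n) ℝ)
    (hQ1 : Q *ᵥ (1 : Fin n → ℝ) = 0) (hQQ : Q * Qᵀ = 1)
    (hQP : Qᵀ * Q = 1 - (n : ℝ)⁻¹ • Matrix.of (fun _ _ => (1 : ℝ)))
    (S : Matrix (Fin (n - 1)) (Fin (n - 1)) ℝ)
    (hS : (Q * Lu * Qᵀ) * S + S * (Q * Lu * Qᵀ)ᵀ = 1)
    (B : Matrix (Fin n) (Fin n) ℝ) (hB : IsMoorePenrose Lu B) :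
    ∀ i j : Fin n,
      (Pi.single i 1 - Pi.single j 1) ⬝ᵥ
          (((2 : ℝ) • (Qᵀ * S * Q)) *ᵥ (Pi.single i 1 - Pi.single j 1)) =
      (Pi.single i 1 - Pi.single j 1) ⬝ᵥ (B *ᵥ (Pi.single i 1 - Pi.single j 1)) :=
  effective_resistance_eq_resistance_distance_general Lu hpsd hrow hrank Q hQ1 hQQ hQP S hS B hB
end

section
/- Let L̄ be an (n−1)×(n−1) matrix with all eigenvalues of positive real part and Σ the unique solution of L̄Σ + ΣL̄ᵀ = I. Then there exists a skew-symmetric matrix K̄ satisfying L̄K̄ + K̄L̄ᵀ = (1/2)(L̄ − L̄ᵀ), and with this K̄ one has L̄ = (K̄ + (1/2)I) Σ^{-1}. -/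
/-!
Write `K := L S - ½ I`. Transposing `L S + S Lᵀ = I` shows that `Sᵀ` solves the same Lyapunov
equation; the Lyapunov operator `X ↦ L X + X Lᵀ` is injective because, by Sylvester's theorem,
`L` and `-Lᵀ` share no eigenvalue, so `S` is symmetric. Then `Kᵀ = S Lᵀ - ½ I = ½ I - L S = -K`,
`L K + K Lᵀ = L (L S + S Lᵀ) - ½ (L + Lᵀ) = ½ (L - Lᵀ)`, and `K + ½ I = L S`. Finally a symmetric
solution `S` is invertible: `S v = 0` gives `v = S Lᵀ v`, whence `v ⬝ v = (S v) ⬝ (Lᵀ v) = 0`.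
-/

open Matrix Polynomial

namespace Matrix

variable {m n : Type*} [Fintype m] [DecidableEq m] [Fintype n] [DecidableEq n]

theorem spectrum_transpose {R : Type*} [CommRing R] (A : Matrix n n R) :
    spectrum R Aᵀ = spectrum R A := by
  ext r
  rw [spectrum.mem_iff, spectrum.mem_iff, ← isUnit_transpose (algebraMap R _ r - A),
    transpose_sub, algebraMap_eq_diagonal, diagonal_transpose]

theorem aeval_mul_eq_mul_aeval {R : Type*} [CommRing R] {A : Matrix m m R} {B : Matrix n n R}
    {X : Matrix m n R} (h : A * X = X * B) (p : R[X]) : aeval A p * X = X * aeval B p := by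
  have hpow (k : ℕ) : A ^ k * X = X * B ^ k := by
    induction k with
    | zero => simp
    | succ k ih =>
      rw [pow_succ, pow_succ, Matrix.mul_assoc, h, ← Matrix.mul_assoc, ih, Matrix.mul_assoc]
  induction p using Polynomial.induction_on' with
  | add p q hp hq => rw [map_add, map_add, Matrix.add_mul, Matrix.mul_add, hp, hq]
  | monomial k c =>
    rw [aeval_monomial, aeval_monomial, Algebra.algebraMap_eq_smul_one,
      Algebra.algebraMap_eq_smul_one, smul_one_mul, smul_one_mul, Matrix.smul_mul, hpow,
      Matrix.mul_smul]

/-- Sylvester: `χ_A(B)` is invertible, while `X χ_A(B) = χ_A(A) X = 0`. -/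
theorem eq_zero_of_mul_eq_mul_of_disjoint_spectrum {K : Type*} [Field K] [IsAlgClosed K]
    {A : Matrix m m K} {B : Matrix n n K} {X : Matrix m n K}
    (hAB : Disjoint (spectrum K A) (spectrum K B)) (hX : A * X = X * B) : X = 0 := by
  cases isEmpty_or_nonempty m
  · exact Subsingleton.elim _ _
  have hunit : IsUnit (aeval B A.charpoly).det := by
    rw [← isUnit_iff_isUnit_det, ← spectrum.zero_notMem_iff K,
      spectrum.map_polynomial_aeval_of_degree_pos _ _ (by
        rw [charpoly_degree_eq_dim]; exact_mod_cast Fintype.card_pos)]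
    rintro ⟨k, hkB, hk⟩
    exact hAB.ne_of_mem (mem_spectrum_iff_isRoot_charpoly.mpr hk) hkB rfl
  have hzero : X * aeval B A.charpoly = 0 := by
    rw [← aeval_mul_eq_mul_aeval hX, aeval_self_charpoly, Matrix.zero_mul]
  rw [← mul_nonsing_inv_cancel_right _ X hunit, hzero, Matrix.zero_mul]

theorem eq_zero_of_mul_add_mul_transpose_eq_zero {K : Type*} [Field K] [IsAlgClosed K]
    {A D : Matrix n n K} (hA : Disjoint (spectrum K A) (-spectrum K A))
    (hD : A * D + D * Aᵀ = 0) : D = 0 := by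
  refine eq_zero_of_mul_eq_mul_of_disjoint_spectrum (A := A) (B := -Aᵀ) ?_ ?_
  · rwa [← spectrum.neg_eq, spectrum_transpose]
  · rw [mul_neg, eq_neg_iff_add_eq_zero, hD]

theorem disjoint_spectrum_neg_of_forall_re_pos {A : Matrix n n ℂ}
    (hA : ∀ μ ∈ spectrum ℂ A, 0 < μ.re) : Disjoint (spectrum ℂ A) (-spectrum ℂ A) := by
  refine Set.disjoint_left.mpr fun μ hμ hμ' => ?_
  have := hA _ (Set.mem_neg.mp hμ')
  rw [Complex.neg_re] at this
  linarith [hA μ hμ]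

theorem eq_zero_of_mul_add_mul_transpose_eq_zero_of_re_pos {L D : Matrix n n ℝ}
    (hL : ∀ μ ∈ spectrum ℂ (L.map Complex.ofReal), 0 < μ.re) (hD : L * D + D * Lᵀ = 0) :
    D = 0 := by
  have hD' : L.map Complex.ofReal * D.map Complex.ofReal
      + D.map Complex.ofReal * (L.map Complex.ofReal)ᵀ = 0 := by
    have h := congrArg (Complex.ofRealHom.mapMatrix (m := n)) hD
    simp only [map_add, map_mul, map_zero, RingHom.mapMatrix_apply] at h
    exact h
  have hDℂ := eq_zero_of_mul_add_mul_transpose_eq_zero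
    (disjoint_spectrum_neg_of_forall_re_pos hL) hD'
  exact map_injective Complex.ofReal_injective (by simpa using hDℂ)

theorem transpose_eq_of_mul_add_mul_transpose_eq_one_of_re_pos {L S : Matrix n n ℝ}
    (hL : ∀ μ ∈ spectrum ℂ (L.map Complex.ofReal), 0 < μ.re) (hS : L * S + S * Lᵀ = 1) :
    Sᵀ = S := by
  have hST : L * Sᵀ + Sᵀ * Lᵀ = 1 := by
    simpa [add_comm] using congrArg transpose hS
  have hdiff : L * (Sᵀ - S) + (Sᵀ - S) * Lᵀ = 0 := by
    rw [mul_sub, sub_mul, sub_add_sub_comm, hST, hS, sub_self]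
  exact sub_eq_zero.mp (eq_zero_of_mul_add_mul_transpose_eq_zero_of_re_pos hL hdiff)

variable {R : Type*} [Field R]

theorem isUnit_of_mul_add_mul_transpose_eq_one [LinearOrder R] [IsStrictOrderedRing R]
    {L S : Matrix n n R} (hSym : Sᵀ = S) (hS : L * S + S * Lᵀ = 1) : IsUnit S := by
  refine mulVec_injective_iff_isUnit.mp ((injective_iff_map_eq_zero (mulVecLin S)).mpr ?_)
  intro v (hv : S *ᵥ v = 0)
  have hv_range : v = S *ᵥ (Lᵀ *ᵥ v) := by
    calc v = (L * S + S * Lᵀ) *ᵥ v := by rw [hS, one_mulVec]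
      _ = S *ᵥ (Lᵀ *ᵥ v) := by
        rw [add_mulVec, ← mulVec_mulVec, hv, mulVec_zero, zero_add, mulVec_mulVec]
  have hvv : v ⬝ᵥ v = 0 := by
    calc v ⬝ᵥ v = v ⬝ᵥ (S *ᵥ (Lᵀ *ᵥ v)) := by rw [← hv_range]
      _ = 0 := by rw [dotProduct_mulVec, ← mulVec_transpose, hSym, hv, zero_dotProduct]
  exact dotProduct_self_eq_zero.mp hvv

theorem transpose_mul_sub_half_of_mul_add_mul_transpose_eq_one [CharZero R]
    {L S : Matrix n n R} (hSym : Sᵀ = S) (hS : L * S + S * Lᵀ = 1) :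
    (L * S - (1 / 2 : R) • 1)ᵀ = -(L * S - (1 / 2 : R) • 1) := by
  rw [transpose_sub, transpose_mul, transpose_smul, transpose_one, hSym,
    eq_sub_of_add_eq' hS]
  module

theorem mul_add_mul_transpose_mul_sub_half [CharZero R]
    {L S : Matrix n n R} (hS : L * S + S * Lᵀ = 1) :
    L * (L * S - (1 / 2 : R) • 1) + (L * S - (1 / 2 : R) • 1) * Lᵀ = (1 / 2 : R) • (L - Lᵀ) := by
  have hL : L * (L * S) + L * S * Lᵀ = L := by rw [mul_assoc, ← mul_add, hS, mul_one]
  rw [mul_sub, sub_mul, eq_sub_of_add_eq' hL, mul_smul_comm, mul_one, smul_mul_assoc, one_mul]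
  module

end Matrix

/-- If all eigenvalues of `L̄` have positive real part and `Σ` solves
`L̄Σ + ΣL̄ᵀ = I`, then there exists a skew-symmetric `K̄` with
`L̄K̄ + K̄L̄ᵀ = (1/2)(L̄ - L̄ᵀ)` and `L̄ = (K̄ + (1/2)I)Σ⁻¹`. -/
theorem skew_decomposition {m : ℕ} (L : Matrix (Fin m) (Fin m) ℝ)
    (hL : ∀ μ ∈ spectrum ℂ (L.map (Complex.ofReal)), 0 < μ.re)
    (S : Matrix (Fin m) (Fin m) ℝ) (hS : L * S + S * Lᵀ = 1) :
    ∃ K : Matrix (Fin m) (Fin m) ℝ, Kᵀ = -K ∧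
      L * K + K * Lᵀ = (1 / 2 : ℝ) • (L - Lᵀ) ∧
      L = (K + (1 / 2 : ℝ) • 1) * S⁻¹ := by
  have hSym : Sᵀ = S := transpose_eq_of_mul_add_mul_transpose_eq_one_of_re_pos hL hS
  have hSdet : IsUnit S.det :=
    (isUnit_iff_isUnit_det S).mp (isUnit_of_mul_add_mul_transpose_eq_one hSym hS)
  refine ⟨L * S - (1 / 2 : ℝ) • 1, transpose_mul_sub_half_of_mul_add_mul_transpose_eq_one hSym hS,
    mul_add_mul_transpose_mul_sub_half hS, ?_⟩
  rw [sub_add_cancel, mul_nonsing_inv_cancel_right _ _ hSdet]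
end

section
/- Let L̄ ∈ ℝ^{m×m} satisfy L̄Σ + ΣL̄ᵀ = I with Σ symmetric positive definite. Then for every eigenvalue λ of L̄: λ_min((1/2)Σ^{-1}) ≤ Re(λ) ≤ λ_max((1/2)Σ^{-1}). -/
/-!
Let `w` be a left eigenvector of `L` for `μ`. Evaluating `L Σ + Σ Lᵀ = I` as a Hermitian form
at `w` gives `‖w‖² = 2 Re μ · (w Σ w*)`. Conjugating `λ_min I ≤ ½ Σ⁻¹ ≤ λ_max I` by `Σ^{1/2}`
gives `λ_min Σ ≤ ½ I ≤ λ_max Σ` in the Loewner order, and evaluating these at `w` squeezes `Re μ`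
between `λ_min` and `λ_max`.
-/

open Matrix

open scoped MatrixOrder ComplexOrder

namespace Matrix

theorem conjTranspose_map_ofReal {m n : Type*} (M : Matrix m n ℝ) :
    (M.map Complex.ofReal)ᴴ = Mᵀ.map Complex.ofReal := by
  ext i j
  simp

theorem map_ofReal_smul {m n : Type*} (r : ℝ) (M : Matrix m n ℝ) :
    (r • M).map Complex.ofReal = r • M.map Complex.ofReal :=
  Matrix.map_smul _ r (fun a ↦ by simp [Complex.real_smul]) M

variable {n : Type*} [Fintype n]

theorem exists_vecMul_eq_smul_of_mem_spectrum {K : Type*} [Field K] [DecidableEq n]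
    {M : Matrix n n K} {μ : K} (hμ : μ ∈ spectrum K M) : ∃ w ≠ 0, w ᵥ* M = μ • w := by
  rw [spectrum.mem_iff, isUnit_iff_isUnit_det, isUnit_iff_ne_zero, not_not,
    ← exists_vecMul_eq_zero_iff] at hμ
  obtain ⟨w, hw0, hw⟩ := hμ
  refine ⟨w, hw0, ?_⟩
  rwa [Algebra.algebraMap_eq_smul_one, vecMul_sub, vecMul_smul, vecMul_one, sub_eq_zero,
    eq_comm] at hw

theorem dotProduct_star_eq_of_mul_add_mul_conjTranspose_eq_one {R : Type*} [DecidableEq n]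
    [CommRing R] [StarRing R] {A S : Matrix n n R} (hAS : A * S + S * Aᴴ = 1) {μ : R}
    {w : n → R} (hw : w ᵥ* A = μ • w) :
    w ⬝ᵥ star w = (μ + star μ) * (w ⬝ᵥ S *ᵥ star w) := by
  have hAw : Aᴴ *ᵥ star w = star μ • star w := by
    rw [← star_vecMul, hw, star_smul]
  calc w ⬝ᵥ star w = w ⬝ᵥ (A * S + S * Aᴴ) *ᵥ star w := by rw [hAS, one_mulVec]
    _ = (w ᵥ* A) ⬝ᵥ S *ᵥ star w + w ⬝ᵥ S *ᵥ (Aᴴ *ᵥ star w) := by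
      rw [add_mulVec, dotProduct_add, ← mulVec_mulVec, ← mulVec_mulVec, dotProduct_mulVec]
    _ = (μ + star μ) * (w ⬝ᵥ S *ᵥ star w) := by
      rw [hw, hAw, mulVec_smul, smul_dotProduct, dotProduct_smul, smul_eq_mul, smul_eq_mul,
        add_mul]

theorem re_dotProduct_mulVec_le_of_le {𝕜 : Type*} [RCLike 𝕜] {A B : Matrix n n 𝕜} (h : A ≤ B)
    (x : n → 𝕜) : RCLike.re (star x ⬝ᵥ A *ᵥ x) ≤ RCLike.re (star x ⬝ᵥ B *ᵥ x) := by
  have := (le_iff.mp h).re_dotProduct_nonneg x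
  rwa [sub_mulVec, dotProduct_sub, map_sub, sub_nonneg] at this

theorem re_dotProduct_map_ofReal_mulVec_star (M : Matrix n n ℝ) (w : n → ℂ) :
    (w ⬝ᵥ M.map Complex.ofReal *ᵥ star w).re =
      (fun i ↦ (w i).re) ⬝ᵥ M *ᵥ (fun i ↦ (w i).re) +
        (fun i ↦ (w i).im) ⬝ᵥ M *ᵥ (fun i ↦ (w i).im) := by
  simp only [dotProduct, mulVec, Complex.re_sum, Finset.mul_sum, ← Finset.sum_add_distrib]
  refine Finset.sum_congr rfl fun i _ ↦ Finset.sum_congr rfl fun j _ ↦ ?_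
  simp

theorem re_dotProduct_map_ofReal_mulVec_star_le_of_le {A B : Matrix n n ℝ} (h : A ≤ B)
    (w : n → ℂ) :
    (w ⬝ᵥ A.map Complex.ofReal *ᵥ star w).re ≤ (w ⬝ᵥ B.map Complex.ofReal *ᵥ star w).re := by
  rw [re_dotProduct_map_ofReal_mulVec_star, re_dotProduct_map_ofReal_mulVec_star]
  exact add_le_add (by simpa using re_dotProduct_mulVec_le_of_le h _)
    (by simpa using re_dotProduct_mulVec_le_of_le h _)

theorem PosDef.re_dotProduct_map_ofReal_mulVec_star_pos {S : Matrix n n ℝ} (hS : S.PosDef)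
    {w : n → ℂ} (hw : w ≠ 0) : 0 < (w ⬝ᵥ S.map Complex.ofReal *ᵥ star w).re := by
  rw [re_dotProduct_map_ofReal_mulVec_star]
  have hpos {x : n → ℝ} (hx : x ≠ 0) : 0 < x ⬝ᵥ S *ᵥ x := by
    simpa using hS.dotProduct_mulVec_pos hx
  have hnonneg (x : n → ℝ) : 0 ≤ x ⬝ᵥ S *ᵥ x := by
    simpa using hS.posSemidef.dotProduct_mulVec_nonneg x
  by_cases hre : (fun i ↦ (w i).re) = 0
  · refine add_pos_of_nonneg_of_pos (hnonneg _) (hpos fun him ↦ hw ?_)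
    exact funext fun i ↦ Complex.ext (congrFun hre i) (congrFun him i)
  · exact add_pos_of_pos_of_nonneg (hpos hre) (hnonneg _)

section RCLike

variable {𝕜 : Type*} [RCLike 𝕜] [DecidableEq n]

theorem IsHermitian.iInf_eigenvalues_smul_one_le {A : Matrix n n 𝕜} (hA : A.IsHermitian) :
    (⨅ i, hA.eigenvalues i) • (1 : Matrix n n 𝕜) ≤ A := by
  rw [← Algebra.algebraMap_eq_smul_one, algebraMap_le_iff_le_spectrum (ha := hA.isSelfAdjoint),
    hA.spectrum_real_eq_range_eigenvalues]
  rintro _ ⟨i, rfl⟩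
  exact ciInf_le (Set.finite_range _).bddBelow i

theorem IsHermitian.le_iSup_eigenvalues_smul_one {A : Matrix n n 𝕜} (hA : A.IsHermitian) :
    A ≤ (⨆ i, hA.eigenvalues i) • (1 : Matrix n n 𝕜) := by
  rw [← Algebra.algebraMap_eq_smul_one, le_algebraMap_iff_spectrum_le (ha := hA.isSelfAdjoint),
    hA.spectrum_real_eq_range_eigenvalues]
  rintro _ ⟨i, rfl⟩
  exact le_ciSup (Set.finite_range _).bddAbove i

theorem PosDef.sqrt_mul_inv_mul_sqrt {S : Matrix n n 𝕜} (hS : S.PosDef) :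
    CFC.sqrt S * S⁻¹ * CFC.sqrt S = 1 := by
  have hR : IsUnit (CFC.sqrt S).det := (isUnit_iff_isUnit_det _).mp <|
    CFC.isUnit_sqrt_iff_isStrictlyPositive.mpr (isStrictlyPositive_iff_posDef.mpr hS)
  have hinv : S⁻¹ = (CFC.sqrt S)⁻¹ * (CFC.sqrt S)⁻¹ := by
    rw [← Matrix.mul_inv_rev, CFC.sqrt_mul_sqrt_self S hS.posSemidef.nonneg]
  rw [hinv, ← Matrix.mul_assoc, mul_nonsing_inv _ hR, Matrix.one_mul, nonsing_inv_mul _ hR]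

theorem PosDef.iInf_eigenvalues_smul_le_smul_one {S : Matrix n n 𝕜} (hS : S.PosDef) {c : ℝ}
    (hH : (c • S⁻¹).IsHermitian) : (⨅ i, hH.eigenvalues i) • S ≤ c • (1 : Matrix n n 𝕜) := by
  simpa [Matrix.smul_mul, Matrix.mul_smul, CFC.sqrt_mul_sqrt_self S hS.posSemidef.nonneg,
    hS.sqrt_mul_inv_mul_sqrt, Matrix.mul_assoc] using
    conjugate_le_conjugate_of_nonneg hH.iInf_eigenvalues_smul_one_le (CFC.sqrt_nonneg S)

theorem PosDef.smul_one_le_iSup_eigenvalues_smul {S : Matrix n n 𝕜} (hS : S.PosDef) {c : ℝ}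
    (hH : (c • S⁻¹).IsHermitian) : c • (1 : Matrix n n 𝕜) ≤ (⨆ i, hH.eigenvalues i) • S := by
  simpa [Matrix.smul_mul, Matrix.mul_smul, CFC.sqrt_mul_sqrt_self S hS.posSemidef.nonneg,
    hS.sqrt_mul_inv_mul_sqrt, Matrix.mul_assoc] using
    conjugate_le_conjugate_of_nonneg hH.le_iSup_eigenvalues_smul_one (CFC.sqrt_nonneg S)

end RCLike

variable [DecidableEq n]

theorem PosDef.iInf_eigenvalues_mul_re_dotProduct_map_ofReal_le {S : Matrix n n ℝ}
    (hS : S.PosDef) {c : ℝ} (hH : (c • S⁻¹).IsHermitian) (w : n → ℂ) :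
    (⨅ i, hH.eigenvalues i) * (w ⬝ᵥ S.map Complex.ofReal *ᵥ star w).re ≤
      c * (w ⬝ᵥ star w).re := by
  simpa [map_ofReal_smul, smul_mulVec] using
    re_dotProduct_map_ofReal_mulVec_star_le_of_le (hS.iInf_eigenvalues_smul_le_smul_one hH) w

theorem PosDef.mul_re_dotProduct_le_iSup_eigenvalues_mul {S : Matrix n n ℝ}
    (hS : S.PosDef) {c : ℝ} (hH : (c • S⁻¹).IsHermitian) (w : n → ℂ) :
    c * (w ⬝ᵥ star w).re ≤
      (⨆ i, hH.eigenvalues i) * (w ⬝ᵥ S.map Complex.ofReal *ᵥ star w).re := by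
  simpa [map_ofReal_smul, smul_mulVec] using
    re_dotProduct_map_ofReal_mulVec_star_le_of_le (hS.smul_one_le_iSup_eigenvalues_smul hH) w

end Matrix

theorem eigenvalue_real_part_bounds_general {m : ℕ}
    (L S : Matrix (Fin m) (Fin m) ℝ) (hpd : S.PosDef)
    (hS : L * S + S * Lᵀ = 1)
    (hH : ((1 / 2 : ℝ) • S⁻¹).IsHermitian) :
    ∀ μ ∈ spectrum ℂ (L.map (Complex.ofReal)),
      (⨅ i, hH.eigenvalues i) ≤ μ.re ∧ μ.re ≤ (⨆ i, hH.eigenvalues i) := by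
  intro μ hμ
  obtain ⟨w, hw0, hw⟩ := exists_vecMul_eq_smul_of_mem_spectrum hμ
  have hSc : L.map Complex.ofReal * S.map Complex.ofReal +
      S.map Complex.ofReal * (L.map Complex.ofReal)ᴴ = 1 := by
    rw [conjTranspose_map_ofReal]
    have := congrArg Complex.ofRealHom.mapMatrix hS
    rwa [map_add, map_mul, map_mul, map_one] at this
  have hnorm : (w ⬝ᵥ star w).re = 2 * μ.re * (w ⬝ᵥ S.map Complex.ofReal *ᵥ star w).re := by
    have := congrArg Complex.re (dotProduct_star_eq_of_mul_add_mul_conjTranspose_eq_one hSc hw)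
    rwa [Complex.star_def, Complex.add_conj, Complex.re_ofReal_mul] at this
  have hpos := hpd.re_dotProduct_map_ofReal_mulVec_star_pos hw0
  have hlow := hpd.iInf_eigenvalues_mul_re_dotProduct_map_ofReal_le hH w
  have hupp := hpd.mul_re_dotProduct_le_iSup_eigenvalues_mul hH w
  exact ⟨le_of_mul_le_mul_right (by linarith) hpos, le_of_mul_le_mul_right (by linarith) hpos⟩

/-- If `L̄Σ + ΣL̄ᵀ = I` with `Σ` symmetric positive definite, then the real
part of every eigenvalue of `L̄` lies between the smallest and largest eigenvalues of the
symmetric matrix `(1/2)Σ⁻¹`. -/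
theorem eigenvalue_real_part_bounds {m : ℕ} (hm : 0 < m)
    (L S : Matrix (Fin m) (Fin m) ℝ) (hsym : Sᵀ = S) (hpd : S.PosDef)
    (hS : L * S + S * Lᵀ = 1)
    (hH : ((1 / 2 : ℝ) • S⁻¹).IsHermitian) :
    ∀ μ ∈ spectrum ℂ (L.map (Complex.ofReal)),
      (⨅ i, hH.eigenvalues i) ≤ μ.re ∧ μ.re ≤ (⨆ i, hH.eigenvalues i) :=
  eigenvalue_real_part_bounds_general L S hpd hS hH
end

section
/- Let L be a connected directed-graph Laplacian, L̂_u its symmetrization, and (P, P̄) a bipartition with f the ratio-cut vector (f_i = √(|P̄|/|P|) on P, f_i = −√(|P|/|P̄|) on P̄). Then fᵀL̂_u f / (2n) ≤ cut(P,P̄)/|P| + cut(P̄,P)/|P̄| + (1/√|P| + 1/√|P̄|)(cut(P,P̄) + cut(P̄,P)), and the analogous lower bound with minus the last term holds. -/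
open Matrix

private lemma ratio_cut_aux_sq_add_sq {a b : ℝ} (ha : 0 ≤ a) (hb : 0 ≤ b) :
    a ^ 2 + b ^ 2 ≤ (a + b) ^ 2 := by nlinarith

private lemma ratio_cut_aux_one_le {s : ℝ} (hs : 0 < s) (h1 : 1 ≤ s ^ 2) : 1 ≤ s := by
  nlinarith

set_option maxHeartbeats 2000000 in
/-- Ratio-cut bounds. For a directed graph Laplacian `L = D - A`, its
symmetrization `L̂ᵤ` (satisfying `fᵀL̂ᵤf = (1/2)fᵀLf + (1/2)fᵀSLf` for `f ⊥ 𝟙`, `S`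
orthogonal), and a bipartition `(P, P̄)` with ratio-cut vector `f`, the quantity
`fᵀL̂ᵤf/(2n)` is bounded above and below by the directed ratio cut plus/minus
`(1/√|P| + 1/√|P̄|)(cut(P,P̄) + cut(P̄,P))`. -/
theorem ratio_cut_bounds {n : ℕ} (hn : 0 < n)
    (A : Matrix (Fin n) (Fin n) ℝ) (hA : ∀ i j, 0 ≤ A i j)
    (L : Matrix (Fin n) (Fin n) ℝ)
    (hL : L = Matrix.diagonal (fun i => ∑ j, A i j) - A)
    (S : Matrix (Fin n) (Fin n) ℝ) (hS : Sᵀ * S = 1)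
    (Lhat : Matrix (Fin n) (Fin n) ℝ)
    (hB : ∀ g : Fin n → ℝ, g ⬝ᵥ (1 : Fin n → ℝ) = 0 →
      g ⬝ᵥ (Lhat *ᵥ g) =
        (1 / 2 : ℝ) * (g ⬝ᵥ (L *ᵥ g)) + (1 / 2 : ℝ) * (g ⬝ᵥ ((S * L) *ᵥ g)))
    (P : Finset (Fin n)) (hP : P.Nonempty) (hP' : P ≠ Finset.univ)
    (f : Fin n → ℝ)
    (hf : ∀ i, f i = if i ∈ P then Real.sqrt ((Pᶜ.card : ℝ) / (P.card : ℝ))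
      else -Real.sqrt ((P.card : ℝ) / (Pᶜ.card : ℝ))) :
    (f ⬝ᵥ (Lhat *ᵥ f)) / (2 * (n : ℝ)) ≤
      (∑ i ∈ P, ∑ j ∈ Pᶜ, A i j) / (P.card : ℝ) +
      (∑ i ∈ Pᶜ, ∑ j ∈ P, A i j) / (Pᶜ.card : ℝ) +
      (1 / Real.sqrt (P.card : ℝ) + 1 / Real.sqrt (Pᶜ.card : ℝ)) *
        ((∑ i ∈ P, ∑ j ∈ Pᶜ, A i j) + (∑ i ∈ Pᶜ, ∑ j ∈ P, A i j)) ∧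
    (∑ i ∈ P, ∑ j ∈ Pᶜ, A i j) / (P.card : ℝ) +
      (∑ i ∈ Pᶜ, ∑ j ∈ P, A i j) / (Pᶜ.card : ℝ) -
      (1 / Real.sqrt (P.card : ℝ) + 1 / Real.sqrt (Pᶜ.card : ℝ)) *
        ((∑ i ∈ P, ∑ j ∈ Pᶜ, A i j) + (∑ i ∈ Pᶜ, ∑ j ∈ P, A i j)) ≤
      (f ⬝ᵥ (Lhat *ᵥ f)) / (2 * (n : ℝ)) := by
  -- basic cardinalities
  set p : ℝ := (P.card : ℝ) with hpdef
  set q : ℝ := (Pᶜ.card : ℝ) with hqdef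
  have hp : 0 < p := by rw [hpdef]; exact_mod_cast Finset.card_pos.mpr hP
  have hPc : Pᶜ.Nonempty := by
    rw [Finset.nonempty_iff_ne_empty]
    intro h
    exact hP' (by simpa [Finset.compl_eq_empty_iff] using h)
  have hq : 0 < q := by rw [hqdef]; exact_mod_cast Finset.card_pos.mpr hPc
  have hp1 : 1 ≤ p := by
    rw [hpdef]; exact_mod_cast Nat.one_le_iff_ne_zero.mpr (Finset.card_pos.mpr hP).ne'
  have hq1 : 1 ≤ q := by
    rw [hqdef]; exact_mod_cast Nat.one_le_iff_ne_zero.mpr (Finset.card_pos.mpr hPc).ne'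
  have hpq : p + q = (n : ℝ) := by
    rw [hpdef, hqdef, ← Nat.cast_add, Finset.card_add_card_compl, Fintype.card_fin]
  set sp := Real.sqrt p with hspdef
  set sq := Real.sqrt q with hsqdef
  have hsp0 : 0 < sp := Real.sqrt_pos.mpr hp
  have hsq0 : 0 < sq := Real.sqrt_pos.mpr hq
  have hsp2 : sp ^ 2 = p := Real.sq_sqrt hp.le
  have hsq2 : sq ^ 2 = q := Real.sq_sqrt hq.le
  have hα' : Real.sqrt (q / p) = sq / sp := by rw [hspdef, hsqdef, Real.sqrt_div hq.le]
  have hβ' : Real.sqrt (p / q) = sp / sq := by rw [hspdef, hsqdef, Real.sqrt_div hp.le]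
  rw [hα', hβ'] at hf
  set α := sq / sp with hαdef
  set β := sp / sq with hβdef
  clear_value p q
  clear_value sp sq α β
  have hfi : ∀ i ∈ P, f i = α := fun i hi => by rw [hf i, if_pos hi]
  have hfi' : ∀ i ∈ Pᶜ, f i = -β := fun i hi => by
    rw [hf i, if_neg (Finset.mem_compl.mp hi)]
  set c1 := ∑ i ∈ P, ∑ j ∈ Pᶜ, A i j with hc1def
  set c2 := ∑ i ∈ Pᶜ, ∑ j ∈ P, A i j with hc2def
  have hc1 : 0 ≤ c1 := Finset.sum_nonneg fun i _ => Finset.sum_nonneg fun j _ => hA i j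
  have hc2 : 0 ≤ c2 := Finset.sum_nonneg fun i _ => Finset.sum_nonneg fun j _ => hA i j
  clear_value c1 c2
  have split : ∀ g : Fin n → ℝ, ∑ i, g i = ∑ i ∈ P, g i + ∑ i ∈ Pᶜ, g i :=
    fun g => (Finset.sum_add_sum_compl P g).symm
  -- orthogonality
  have hperp : f ⬝ᵥ (1 : Fin n → ℝ) = 0 := by
    have e : f ⬝ᵥ (1 : Fin n → ℝ) = ∑ i, f i := by
      simp [dotProduct]
    rw [e, split, Finset.sum_congr rfl hfi, Finset.sum_congr rfl hfi']
    simp only [Finset.sum_const, nsmul_eq_mul, ← hpdef, ← hqdef, hαdef, hβdef]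
    rw [← hsp2, ← hsq2]
    field_simp
    ring
  -- Lf formula
  have hLf : ∀ i, (L *ᵥ f) i = ∑ j, A i j * (f i - f j) := by
    intro i
    rw [hL, Matrix.sub_mulVec]
    have ed : ((Matrix.diagonal fun i => ∑ j, A i j) *ᵥ f) i = (∑ j, A i j) * f i :=
      Matrix.mulVec_diagonal _ _ _
    rw [Pi.sub_apply, ed]
    simp only [Matrix.mulVec, dotProduct, mul_sub,
      Finset.sum_sub_distrib, Finset.sum_mul]
  -- quadratic form of L
  have hQ : f ⬝ᵥ (L *ᵥ f) = c1 * ((n : ℝ) / p) + c2 * ((n : ℝ) / q) := by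
    have e1 : f ⬝ᵥ (L *ᵥ f) = ∑ i, ∑ j, A i j * (f i * (f i - f j)) := by
      simp only [dotProduct, hLf, Finset.mul_sum]
      exact Finset.sum_congr rfl fun i _ => Finset.sum_congr rfl fun j _ => by ring
    rw [e1, split]
    have eP : ∀ i ∈ P, ∑ j, A i j * (f i * (f i - f j)) =
        (∑ j ∈ Pᶜ, A i j) * ((n : ℝ) / p) := by
      intro i hi
      rw [split fun j => A i j * (f i * (f i - f j))]
      have z1 : ∑ j ∈ P, A i j * (f i * (f i - f j)) = 0 :=
        Finset.sum_eq_zero fun j hj => by rw [hfi i hi, hfi j hj]; ring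
      rw [z1, zero_add, Finset.sum_mul]
      refine Finset.sum_congr rfl fun j hj => ?_
      rw [hfi i hi, hfi' j hj, hαdef, hβdef]
      have e2 : sq / sp * (sq / sp - -(sp / sq)) = (n : ℝ) / p := by
        rw [← hpq, ← hsp2, ← hsq2]
        field_simp
        ring
      rw [e2]
    have eQ : ∀ i ∈ Pᶜ, ∑ j, A i j * (f i * (f i - f j)) =
        (∑ j ∈ P, A i j) * ((n : ℝ) / q) := by
      intro i hi
      rw [split fun j => A i j * (f i * (f i - f j))]
      have z1 : ∑ j ∈ Pᶜ, A i j * (f i * (f i - f j)) = 0 :=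
        Finset.sum_eq_zero fun j hj => by rw [hfi' i hi, hfi' j hj]; ring
      rw [z1, add_zero, Finset.sum_mul]
      refine Finset.sum_congr rfl fun j hj => ?_
      rw [hfi' i hi, hfi j hj, hαdef, hβdef]
      have e2 : -(sp / sq) * (-(sp / sq) - sq / sp) = (n : ℝ) / q := by
        rw [← hpq, ← hsp2, ← hsq2]
        field_simp
        ring
      rw [e2]
    rw [Finset.sum_congr rfl eP, Finset.sum_congr rfl eQ, ← Finset.sum_mul, ← Finset.sum_mul,
      ← hc1def, ← hc2def]
  -- norm of f
  have hff : f ⬝ᵥ f = (n : ℝ) := by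
    have e : f ⬝ᵥ f = ∑ i, f i * f i := rfl
    have s1 : ∑ i ∈ P, f i * f i = ∑ _i ∈ P, α * α :=
      Finset.sum_congr rfl fun i hi => by rw [hfi i hi]
    have s2 : ∑ i ∈ Pᶜ, f i * f i = ∑ _i ∈ Pᶜ, -β * -β :=
      Finset.sum_congr rfl fun i hi => by rw [hfi' i hi]
    rw [e, split, s1, s2]
    simp only [Finset.sum_const, nsmul_eq_mul, neg_mul_neg, ← hpdef, ← hqdef]
    rw [hαdef, hβdef, ← hpq, ← hsp2, ← hsq2]
    field_simp
    ring
  -- structure of g = L *ᵥ f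
  have hgP : ∀ i ∈ P, (L *ᵥ f) i = (α + β) * ∑ j ∈ Pᶜ, A i j := by
    intro i hi
    rw [hLf, split fun j => A i j * (f i - f j)]
    have z1 : ∑ j ∈ P, A i j * (f i - f j) = 0 :=
      Finset.sum_eq_zero fun j hj => by rw [hfi i hi, hfi j hj]; ring
    rw [z1, zero_add, Finset.mul_sum]
    refine Finset.sum_congr rfl fun j hj => ?_
    rw [hfi i hi, hfi' j hj]; ring
  have hgQ : ∀ i ∈ Pᶜ, (L *ᵥ f) i = -((α + β) * ∑ j ∈ P, A i j) := by
    intro i hi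
    rw [hLf, split fun j => A i j * (f i - f j)]
    have z1 : ∑ j ∈ Pᶜ, A i j * (f i - f j) = 0 :=
      Finset.sum_eq_zero fun j hj => by rw [hfi' i hi, hfi' j hj]; ring
    rw [z1, add_zero]
    rw [show -((α + β) * ∑ j ∈ P, A i j) = ∑ j ∈ P, A i j * (-(α + β)) by
      rw [← Finset.sum_mul]; ring]
    refine Finset.sum_congr rfl fun j hj => ?_
    rw [hfi' i hi, hfi j hj]; ring
  -- bound on ‖L f‖²
  have sq_sum_le : ∀ (s : Finset (Fin n)) (x : Fin n → ℝ), (∀ i ∈ s, 0 ≤ x i) →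
      ∑ i ∈ s, (x i) ^ 2 ≤ (∑ i ∈ s, x i) ^ 2 := by
    intro s x hx
    have hM : ∀ i ∈ s, x i ≤ ∑ j ∈ s, x j := fun i hi => Finset.single_le_sum hx hi
    calc ∑ i ∈ s, (x i) ^ 2 ≤ ∑ i ∈ s, x i * (∑ j ∈ s, x j) :=
          Finset.sum_le_sum fun i hi => by
            rw [pow_two]; exact mul_le_mul_of_nonneg_left (hM i hi) (hx i hi)
      _ = (∑ i ∈ s, x i) ^ 2 := by rw [← Finset.sum_mul]; ring
  have hgg : (L *ᵥ f) ⬝ᵥ (L *ᵥ f) ≤ (α + β) ^ 2 * (c1 + c2) ^ 2 := by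
    have e : (L *ᵥ f) ⬝ᵥ (L *ᵥ f) = ∑ i, ((L *ᵥ f) i) ^ 2 := by
      simp [dotProduct, pow_two]
    rw [e, split]
    have e1 : ∑ i ∈ P, ((L *ᵥ f) i) ^ 2 = (α + β) ^ 2 * ∑ i ∈ P, (∑ j ∈ Pᶜ, A i j) ^ 2 := by
      rw [Finset.mul_sum]
      exact Finset.sum_congr rfl fun i hi => by rw [hgP i hi]; ring
    have e2 : ∑ i ∈ Pᶜ, ((L *ᵥ f) i) ^ 2 = (α + β) ^ 2 * ∑ i ∈ Pᶜ, (∑ j ∈ P, A i j) ^ 2 := by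
      rw [Finset.mul_sum]
      exact Finset.sum_congr rfl fun i hi => by rw [hgQ i hi]; ring
    rw [e1, e2, ← mul_add]
    have hαβ0 : 0 ≤ (α + β) ^ 2 := sq_nonneg _
    have b1 : ∑ i ∈ P, (∑ j ∈ Pᶜ, A i j) ^ 2 ≤ c1 ^ 2 := by
      rw [hc1def]; exact sq_sum_le P _ fun i _ => Finset.sum_nonneg fun j _ => hA i j
    have b2 : ∑ i ∈ Pᶜ, (∑ j ∈ P, A i j) ^ 2 ≤ c2 ^ 2 := by
      rw [hc2def]; exact sq_sum_le Pᶜ _ fun i _ => Finset.sum_nonneg fun j _ => hA i j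
    have hcc : c1 ^ 2 + c2 ^ 2 ≤ (c1 + c2) ^ 2 := ratio_cut_aux_sq_add_sq hc1 hc2
    exact mul_le_mul_of_nonneg_left (by linarith only [b1, b2, hcc]) hαβ0
  -- the cross term via Cauchy-Schwarz and orthogonality of S
  set E := f ⬝ᵥ ((S * L) *ᵥ f) with hEdef
  have hE2 : E ^ 2 ≤ (n : ℝ) * ((α + β) ^ 2 * (c1 + c2) ^ 2) := by
    have hSg : (S *ᵥ (L *ᵥ f)) ⬝ᵥ (S *ᵥ (L *ᵥ f)) = (L *ᵥ f) ⬝ᵥ (L *ᵥ f) := by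
      rw [Matrix.dotProduct_mulVec, ← Matrix.vecMul_transpose, Matrix.vecMul_vecMul,
        hS, Matrix.vecMul_one]
    have hcs : E ^ 2 ≤ (f ⬝ᵥ f) * ((S *ᵥ (L *ᵥ f)) ⬝ᵥ (S *ᵥ (L *ᵥ f))) := by
      have e : E = ∑ i, f i * (S *ᵥ (L *ᵥ f)) i := by
        rw [hEdef, ← Matrix.mulVec_mulVec]; rfl
      rw [e]
      have := Finset.sum_mul_sq_le_sq_mul_sq Finset.univ f (S *ᵥ (L *ᵥ f))
      calc (∑ i, f i * (S *ᵥ (L *ᵥ f)) i) ^ 2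
          ≤ (∑ i, (f i) ^ 2) * ∑ i, ((S *ᵥ (L *ᵥ f)) i) ^ 2 := this
        _ = (f ⬝ᵥ f) * ((S *ᵥ (L *ᵥ f)) ⬝ᵥ (S *ᵥ (L *ᵥ f))) := by
            simp [dotProduct, pow_two]
    rw [hSg, hff] at hcs
    have hn0 : (0 : ℝ) ≤ (n : ℝ) := Nat.cast_nonneg n
    calc E ^ 2 ≤ (n : ℝ) * ((L *ᵥ f) ⬝ᵥ (L *ᵥ f)) := hcs
      _ ≤ (n : ℝ) * ((α + β) ^ 2 * (c1 + c2) ^ 2) := mul_le_mul_of_nonneg_left hgg hn0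
  have hn' : (0:ℝ) < (n:ℝ) := by exact_mod_cast hn
  have hsp1 : 1 ≤ sp := ratio_cut_aux_one_le hsp0 (by rw [hsp2]; exact hp1)
  have hsq1 : 1 ≤ sq := ratio_cut_aux_one_le hsq0 (by rw [hsq2]; exact hq1)
  have hu : 0 < sp * sq := mul_pos hsp0 hsq0
  set T := (1 / sp + 1 / sq) * (c1 + c2) with hTdef
  have hT0 : 0 ≤ T := by
    rw [hTdef]
    have : 0 ≤ 1 / sp + 1 / sq := by positivity
    exact mul_nonneg this (by linarith only [hc1, hc2])
  -- |E| ≤ n * T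
  have hαβn : α + β = (n : ℝ) / (sp * sq) := by
    rw [hαdef, hβdef, ← hpq, ← hsp2, ← hsq2]
    field_simp
    ring
  have hnle : (n : ℝ) ≤ (sp + sq) ^ 2 := by
    rw [← hpq, ← hsp2, ← hsq2]
    exact ratio_cut_aux_sq_add_sq hsp0.le hsq0.le
  have hE2' : E ^ 2 ≤ ((n : ℝ) * T) ^ 2 := by
    have e3 : (n:ℝ) * (((n:ℝ)/(sp*sq))^2 * (c1+c2)^2)
        = ((n:ℝ)^3*(c1+c2)^2)/(sp*sq)^2 := by field_simp
    have e4 : ((n:ℝ) * T)^2 = ((n:ℝ)^2*(sp+sq)^2*(c1+c2)^2)/(sp*sq)^2 := by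
      rw [hTdef]; field_simp; ring
    calc E ^ 2 ≤ (n:ℝ) * ((α + β) ^ 2 * (c1+c2)^2) := hE2
      _ = ((n:ℝ)^3*(c1+c2)^2)/(sp*sq)^2 := by rw [hαβn, e3]
      _ ≤ ((n:ℝ)^2*(sp+sq)^2*(c1+c2)^2)/(sp*sq)^2 := by
          apply (div_le_div_iff_of_pos_right (by positivity)).mpr
          have hkey := mul_le_mul_of_nonneg_left hnle
            (mul_nonneg (sq_nonneg ((n:ℝ))) (sq_nonneg (c1+c2)))
          calc (n:ℝ)^3*(c1+c2)^2 = (n:ℝ)^2*(c1+c2)^2 * (n:ℝ) := by ring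
            _ ≤ (n:ℝ)^2*(c1+c2)^2 * (sp+sq)^2 := hkey
            _ = (n:ℝ)^2*(sp+sq)^2*(c1+c2)^2 := by ring
      _ = ((n : ℝ) * T) ^ 2 := e4.symm
  have habs : |E| ≤ (n : ℝ) * T := by
    have h := Real.sqrt_le_sqrt hE2'
    rwa [Real.sqrt_sq_eq_abs, Real.sqrt_sq (by positivity : (0:ℝ) ≤ (n:ℝ) * T)] at h
  obtain ⟨hElo, hEhi⟩ := abs_le.mp habs
  -- X ≤ T
  have h1p : 1 / p ≤ 1 / sp := by
    apply one_div_le_one_div_of_le hsp0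
    rw [← hsp2, pow_two]
    exact le_mul_of_one_le_left hsp0.le hsp1
  have h1q : 1 / q ≤ 1 / sq := by
    apply one_div_le_one_div_of_le hsq0
    rw [← hsq2, pow_two]
    exact le_mul_of_one_le_left hsq0.le hsq1
  have hX0 : 0 ≤ c1 / p + c2 / q := by positivity
  have hXT : c1 / p + c2 / q ≤ T := by
    have t1 : c1 * (1 / p) ≤ c1 * (1 / sp) := mul_le_mul_of_nonneg_left h1p hc1
    have t2 : c2 * (1 / q) ≤ c2 * (1 / sq) := mul_le_mul_of_nonneg_left h1q hc2
    have t3 : 0 ≤ c1 * (1 / sq) := mul_nonneg hc1 (by positivity)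
    have t4 : 0 ≤ c2 * (1 / sp) := mul_nonneg hc2 (by positivity)
    have eT : T = c1 * (1/sp) + c1 * (1/sq) + c2 * (1/sp) + c2 * (1/sq) := by
      rw [hTdef]; ring
    have e5 : c1 / p = c1 * (1 / p) := by ring
    have e6 : c2 / q = c2 * (1 / q) := by ring
    rw [eT, e5, e6]
    linarith only [t1, t2, t3, t4]
  -- assemble
  have hBf := hB f hperp
  rw [← hEdef] at hBf
  have hmain : (f ⬝ᵥ (Lhat *ᵥ f)) / (2 * (n:ℝ))
      = (c1 / p + c2 / q) / 4 + E / (4 * (n:ℝ)) := by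
    rw [hBf, hQ]
    field_simp
    ring
  have hE4hi : E / (4 * (n:ℝ)) ≤ T / 4 := by
    rw [div_le_div_iff₀ (by linarith only [hn']) (by norm_num)]
    linarith only [hEhi]
  have hE4lo : -(T / 4) ≤ E / (4 * (n:ℝ)) := by
    rw [neg_le, ← neg_div, div_le_div_iff₀ (by linarith only [hn']) (by norm_num)]
    linarith only [hElo]
  constructor
  · rw [hmain]
    linarith only [hE4hi, hX0, hT0]
  · rw [hmain]
    linarith only [hE4lo, hXT, hX0, hT0]
end

section
/- Let L̂_u be a connected undirected Laplacian (symmetric PSD, L̂_u𝟙 = 0, rank n−1) partitioned by a vertex subset V₁ and its complement V₂, with the block L̂_u[V₂,V₂] invertible. Then the Schur complement L̂_u^{k-r} = L̂_u[V₁,V₁] − L̂_u[V₁,V₂] L̂_u[V₂,V₂]^{-1} L̂_u[V₂,V₁] is symmetric positive semidefinite with L̂_u^{k-r}𝟙 = 0, and for all i, j ∈ V₁, the resistance distance (e_i − e_j)ᵀ(L̂_u^{k-r})⁺(e_i − e_j) equals (e_i − e_j)ᵀ L̂_u⁺ (e_i − e_j). -/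
/-!
Write `V₂` for the eliminated nodes. If `Lu y` vanishes on `V₂`, then eliminating `y|V₂` from
the block equations shows that the Kron reduction maps `y|V₁` to `(Lu y)|V₁`. For
`x = e_i - e_j`, which is orthogonal to `ker Lu = span 𝟙`, the vector `y = Lu⁺ x` solves
`Lu y = x`, so `y|V₁` solves the reduced system with right-hand side `x|V₁`. Both resistances
then equal `x ⬝ y`: for symmetric `A` with `A B A = A` and `A z = x` one has `xᵀ B x = xᵀ z`.
Positive semidefiniteness is the Schur complement criterion, the block `Lu[V₂,V₂]` being
positive semidefinite and invertible, hence positive definite.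
-/

open Matrix

namespace Matrix

section KronReduction

variable {ι m R : Type*} [Fintype ι] [DecidableEq ι] [CommRing R] (p : ι → Prop)
  [DecidablePred p]

noncomputable def kronReduction (M : Matrix ι ι R) : Matrix {i // p i} {i // p i} R :=
  M.toBlock p p - M.toBlock p (¬p ·) * (M.toBlock (¬p ·) (¬p ·))⁻¹ * M.toBlock (¬p ·) p

-- The instance on `{i // p i}` is arbitrary so that these lemmas apply to `↥s` for a finset `s`.
omit [DecidableEq ι] in
theorem mulVec_restrict_eq_toBlock_mulVec_add [Fintype {i // p i}] (M : Matrix m ι R)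
    (q : m → Prop) (y : ι → R) :
    (fun i : {i // q i} => (M *ᵥ y) i) =
      M.toBlock q p *ᵥ (fun j : {j // p j} => y j) +
        M.toBlock q (¬p ·) *ᵥ (fun j : {j // ¬p j} => y j) := by
  funext i
  simp only [mulVec, dotProduct, toBlock_apply, Pi.add_apply]
  rw [← Finset.sum_filter_add_sum_filter_not Finset.univ p,
    Finset.sum_subtype (p := p) _ (fun _ => by simp),
    Finset.sum_subtype (p := (¬p ·)) _ (fun _ => by simp)]

variable {p}

theorem kronReduction_mulVec_restrict [Fintype {i // p i}] {M : Matrix ι ι R}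
    (hD : IsUnit (M.toBlock (¬p ·) (¬p ·))) {y : ι → R} (hy : ∀ i, ¬p i → (M *ᵥ y) i = 0) :
    kronReduction p M *ᵥ (fun i : {i // p i} => y i) = fun i : {i // p i} => (M *ᵥ y) i := by
  set D := M.toBlock (¬p ·) (¬p ·)
  have hinterior : M.toBlock (¬p ·) p *ᵥ (fun i : {i // p i} => y i) +
      D *ᵥ (fun i : {i // ¬p i} => y i) = 0 := by
    rw [← mulVec_restrict_eq_toBlock_mulVec_add]
    exact funext fun i => hy i i.2
  have hsolve : D⁻¹ *ᵥ (M.toBlock (¬p ·) p *ᵥ fun i : {i // p i} => y i) =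
      -fun i : {i // ¬p i} => y i := by
    rw [eq_neg_of_add_eq_zero_left hinterior, mulVec_neg, mulVec_mulVec,
      nonsing_inv_mul D ((isUnit_iff_isUnit_det D).mp hD), one_mulVec]
  rw [mulVec_restrict_eq_toBlock_mulVec_add p, kronReduction, sub_mulVec, ← mulVec_mulVec,
    ← mulVec_mulVec, hsolve, mulVec_neg, sub_neg_eq_add]

end KronReduction

open scoped ComplexOrder in
theorem PosSemidef.kronReduction {𝕜 ι : Type*} [RCLike 𝕜] [Fintype ι] [DecidableEq ι]
    {p : ι → Prop} [DecidablePred p] {M : Matrix ι ι 𝕜} (hM : M.PosSemidef)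
    (hD : IsUnit (M.toBlock (¬p ·) (¬p ·))) : (kronReduction p M).PosSemidef := by
  have hCB : M.toBlock (¬p ·) p = (M.toBlock p (¬p ·))ᴴ := by
    ext i j
    exact (hM.isHermitian.apply i j).symm
  have hblocks : M.submatrix (Equiv.sumCompl p) (Equiv.sumCompl p) =
      fromBlocks (M.toBlock p p) (M.toBlock p (¬p ·)) (M.toBlock (¬p ·) p)
        (M.toBlock (¬p ·) (¬p ·)) := by
    ext (i | i) (j | j) <;> rfl
  have hDpos : (M.toBlock (¬p ·) (¬p ·)).PosDef := (hM.submatrix _).posDef_iff_isUnit.mpr hD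
  have := hD.invertible
  have hpsd := hM.submatrix (Equiv.sumCompl p)
  rw [hblocks, hCB, PosDef.fromBlocks₂₂ _ _ hDpos] at hpsd
  rwa [Matrix.kronReduction, hCB]

variable {ι : Type*} [Fintype ι]

theorem exists_eq_smul_of_mulVec_eq_zero_of_rank_eq {K : Type*} [Field K] {A : Matrix ι ι K}
    {v₀ : ι → K} (hv₀ : v₀ ≠ 0) (hAv₀ : A *ᵥ v₀ = 0) (hrank : A.rank = Fintype.card ι - 1)
    {v : ι → K} (hv : A *ᵥ v = 0) : ∃ c : K, v = c • v₀ := by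
  have hker : Module.finrank K (LinearMap.ker A.mulVecLin) = 1 := by
    have := LinearMap.finrank_range_add_finrank_ker A.mulVecLin
    rw [← Matrix.rank, Module.finrank_fintype_fun_eq_card] at this
    have : 0 < Fintype.card ι := Fintype.card_pos_iff.mpr (Function.ne_iff.mp hv₀).nonempty
    omega
  obtain ⟨c, hc⟩ := (finrank_eq_one_iff_of_nonzero' (⟨v₀, hAv₀⟩ : LinearMap.ker A.mulVecLin)
    (by simpa [Subtype.ext_iff] using hv₀)).mp hker ⟨v, hv⟩
  exact ⟨c, congrArg Subtype.val hc.symm⟩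

theorem dotProduct_mulVec_eq_dotProduct_of_mulVec_eq {R : Type*} [CommRing R]
    {A B : Matrix ι ι R} (hA : Aᵀ = A) (hABA : A * B * A = A) {x z : ι → R}
    (hz : A *ᵥ z = x) : x ⬝ᵥ (B *ᵥ x) = x ⬝ᵥ z := by
  subst hz
  rw [dotProduct_comm, dotProduct_mulVec, ← mulVec_transpose, hA, mulVec_mulVec, mulVec_mulVec,
    hABA, dotProduct_comm]

end Matrix

theorem IsMoorePenrose.mulVec_mulVec_eq_self_of_orthogonal_ker {ι : Type*} [Fintype ι]
    [DecidableEq ι] {A B : Matrix ι ι ℝ} (hAB : IsMoorePenrose A B) {v : ι → ℝ}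
    (hv : ∀ k, Aᵀ *ᵥ k = 0 → k ⬝ᵥ v = 0) : A *ᵥ (B *ᵥ v) = v := by
  set r := v - A *ᵥ (B *ᵥ v)
  have hr : Aᵀ *ᵥ r = 0 := by
    rw [mulVec_sub, mulVec_transpose, mulVec_transpose, mulVec_mulVec, ← vecMul_transpose,
      hAB.2.2.1, vecMul_vecMul, hAB.1, sub_self]
  have hrr : r ⬝ᵥ r = 0 := by
    rw [dotProduct_sub, hv r hr, dotProduct_mulVec, ← mulVec_transpose, hr, zero_dotProduct,
      sub_zero]
  exact (sub_eq_zero.mp (dotProduct_self_eq_zero.mp hrr)).symm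

theorem kron_reduction_preserves_resistance_general {n : ℕ}
    (Lu : Matrix (Fin n) (Fin n) ℝ) (hsym : Luᵀ = Lu) (hpsd : Lu.PosSemidef)
    (hrow : Lu *ᵥ (1 : Fin n → ℝ) = 0) (hrank : Lu.rank = n - 1)
    (s : Finset (Fin n))
    (hinv : IsUnit (Lu.toBlock (fun i => i ∉ s) (fun i => i ∉ s)))
    (Lkr : Matrix {i : Fin n // i ∈ s} {i : Fin n // i ∈ s} ℝ)
    (hLkr : Lkr = Lu.toBlock (fun i => i ∈ s) (fun i => i ∈ s) -
      Lu.toBlock (fun i => i ∈ s) (fun i => i ∉ s) *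
        (Lu.toBlock (fun i => i ∉ s) (fun i => i ∉ s))⁻¹ *
        Lu.toBlock (fun i => i ∉ s) (fun i => i ∈ s))
    (B : Matrix (Fin n) (Fin n) ℝ) (hB : IsMoorePenrose Lu B)
    (C : Matrix {i : Fin n // i ∈ s} {i : Fin n // i ∈ s} ℝ)
    (hC : IsMoorePenrose Lkr C) :
    Lkr.PosSemidef ∧ Lkr *ᵥ (1 : {i : Fin n // i ∈ s} → ℝ) = 0 ∧
    ∀ i j : {i : Fin n // i ∈ s},
      (Pi.single i 1 - Pi.single j 1) ⬝ᵥ (C *ᵥ (Pi.single i 1 - Pi.single j 1)) =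
      (Pi.single i.1 1 - Pi.single j.1 1) ⬝ᵥ (B *ᵥ (Pi.single i.1 1 - Pi.single j.1 1)) := by
  obtain rfl : Lkr = kronReduction (fun i => i ∈ s) Lu := hLkr
  refine ⟨hpsd.kronReduction hinv, ?_, fun i j => ?_⟩
  · have hone := kronReduction_mulVec_restrict hinv (y := 1) fun k _ => by rw [hrow]; rfl
    rw [hrow] at hone
    exact hone
  have : Nonempty (Fin n) := ⟨i.1⟩
  set e : Fin n → ℝ := Pi.single i.1 1 - Pi.single j.1 1
  have he : ∀ k, Luᵀ *ᵥ k = 0 → k ⬝ᵥ e = 0 := by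
    intro k hk
    rw [hsym] at hk
    obtain ⟨c, rfl⟩ := exists_eq_smul_of_mulVec_eq_zero_of_rank_eq one_ne_zero hrow
      (by simpa using hrank) hk
    simp [e]
  have hLuBe : Lu *ᵥ (B *ᵥ e) = e := hB.mulVec_mulVec_eq_self_of_orthogonal_ker he
  have hred : kronReduction (fun i => i ∈ s) Lu *ᵥ (fun k : s => (B *ᵥ e) k) =
      Pi.single i 1 - Pi.single j 1 := by
    rw [kronReduction_mulVec_restrict hinv fun k hk => ?_, hLuBe]
    · funext k
      simp only [e, Pi.sub_apply, Pi.single_apply, Subtype.ext_iff]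
    · rw [hLuBe]
      simp [e, show k ≠ i.1 from fun h => hk (h ▸ i.2), show k ≠ j.1 from fun h => hk (h ▸ j.2)]
  rw [dotProduct_mulVec_eq_dotProduct_of_mulVec_eq (hpsd.kronReduction hinv).isHermitian.eq
    hC.1 hred]
  simp [e, sub_dotProduct, single_dotProduct]

/-- Kron reduction. The Schur complement of a connected undirected
Laplacian `Lu` with respect to an invertible block `Lu[V₂,V₂]` is a symmetric PSD
matrix with zero row sums, and the resistance distance between any two retained nodes
computed from the reduced Laplacian equals that computed from `Lu`. -/
theorem kron_reduction_preserves_resistance {n : ℕ} (hn : 0 < n)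
    (Lu : Matrix (Fin n) (Fin n) ℝ) (hsym : Luᵀ = Lu) (hpsd : Lu.PosSemidef)
    (hrow : Lu *ᵥ (1 : Fin n → ℝ) = 0) (hrank : Lu.rank = n - 1)
    (s : Finset (Fin n))
    (hinv : IsUnit (Lu.toBlock (fun i => i ∉ s) (fun i => i ∉ s)))
    (Lkr : Matrix {i : Fin n // i ∈ s} {i : Fin n // i ∈ s} ℝ)
    (hLkr : Lkr = Lu.toBlock (fun i => i ∈ s) (fun i => i ∈ s) -
      Lu.toBlock (fun i => i ∈ s) (fun i => i ∉ s) *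
        (Lu.toBlock (fun i => i ∉ s) (fun i => i ∉ s))⁻¹ *
        Lu.toBlock (fun i => i ∉ s) (fun i => i ∈ s))
    (B : Matrix (Fin n) (Fin n) ℝ) (hB : IsMoorePenrose Lu B)
    (C : Matrix {i : Fin n // i ∈ s} {i : Fin n // i ∈ s} ℝ)
    (hC : IsMoorePenrose Lkr C) :
    Lkr.PosSemidef ∧ Lkr *ᵥ (1 : {i : Fin n // i ∈ s} → ℝ) = 0 ∧
    ∀ i j : {i : Fin n // i ∈ s},
      (Pi.single i 1 - Pi.single j 1) ⬝ᵥ (C *ᵥ (Pi.single i 1 - Pi.single j 1)) =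
      (Pi.single i.1 1 - Pi.single j.1 1) ⬝ᵥ (B *ᵥ (Pi.single i.1 1 - Pi.single j.1 1)) :=
  kron_reduction_preserves_resistance_general Lu hsym hpsd hrow hrank s hinv Lkr hLkr B hB C hC
end
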